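/- The setwise products of the six subsets V₀, V₊, V₋, V₁, V₂, V₃ of the quaternions obey the following multiplication table: V₀·V_x = V_x·V₀ = V_x for every x ∈ {0,+,−,1,2,3}; V₊·V₊ = V₋, V₊·V₋ = V₋·V₊ = V₀, V₋·V₋ = V₊; V₊·V₁ = V₃, V₊·V₂ = V₁, V₊·V₃ = V₂; V₋·V₁ = V₂, V₋·V₂ = V₃, V₋·V₃ = V₁; V₁·V₁ = V₂·V₂ = V₃·V₃ = V₀; V₁·V₂ = V₃·V₁ = V₂·V₃ = V₊; V₂·V₁ = V₁·V₃ = V₃·V₂ = V₋ (here A·B denotes the set of all products ab with a ∈ A, b ∈ B). -/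

import Mathlib

open Quaternion Pointwise

noncomputable section

/-- The quaternion `a + b i + c j + d k`. -/
def q (a b c d : ℝ) : ℍ[ℝ] := ⟨a, b, c, d⟩

/-- `1/√2`. -/
def s : ℝ := (Real.sqrt 2)⁻¹

def V₀ : Set ℍ[ℝ] :=
  {q 1 0 0 0, q (-1) 0 0 0, q 0 1 0 0, q 0 (-1) 0 0,
   q 0 0 1 0, q 0 0 (-1) 0, q 0 0 0 1, q 0 0 0 (-1)}

/-- `½(±1 ± i ± j ± k)` with an even number of plus signs. -/
def Vp : Set ℍ[ℝ] :=
  {q (1/2) (1/2) (1/2) (1/2), q (-(1/2)) (-(1/2)) (-(1/2)) (-(1/2)),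
   q (1/2) (1/2) (-(1/2)) (-(1/2)), q (1/2) (-(1/2)) (1/2) (-(1/2)),
   q (1/2) (-(1/2)) (-(1/2)) (1/2), q (-(1/2)) (1/2) (1/2) (-(1/2)),
   q (-(1/2)) (1/2) (-(1/2)) (1/2), q (-(1/2)) (-(1/2)) (1/2) (1/2)}

/-- `½(±1 ± i ± j ± k)` with an odd number of plus signs. -/
def Vm : Set ℍ[ℝ] :=
  {q (1/2) (-(1/2)) (-(1/2)) (-(1/2)), q (-(1/2)) (1/2) (-(1/2)) (-(1/2)),
   q (-(1/2)) (-(1/2)) (1/2) (-(1/2)), q (-(1/2)) (-(1/2)) (-(1/2)) (1/2),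
   q (1/2) (1/2) (1/2) (-(1/2)), q (1/2) (1/2) (-(1/2)) (1/2),
   q (1/2) (-(1/2)) (1/2) (1/2), q (-(1/2)) (1/2) (1/2) (1/2)}

/-- `(±1 ± i)/√2` and `(±j ± k)/√2`. -/
def V₁ : Set ℍ[ℝ] :=
  {q s s 0 0, q s (-s) 0 0, q (-s) s 0 0, q (-s) (-s) 0 0,
   q 0 0 s s, q 0 0 s (-s), q 0 0 (-s) s, q 0 0 (-s) (-s)}

/-- `(±1 ± j)/√2` and `(±k ± i)/√2`. -/
def V₂ : Set ℍ[ℝ] :=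
  {q s 0 s 0, q s 0 (-s) 0, q (-s) 0 s 0, q (-s) 0 (-s) 0,
   q 0 s 0 s, q 0 s 0 (-s), q 0 (-s) 0 s, q 0 (-s) 0 (-s)}

/-- `(±1 ± k)/√2` and `(±i ± j)/√2`. -/
def V₃ : Set ℍ[ℝ] :=
  {q s 0 0 s, q s 0 0 (-s), q (-s) 0 0 s, q (-s) 0 0 (-s),
   q 0 s s 0, q 0 s (-s) 0, q 0 (-s) s 0, q 0 (-s) (-s) 0}

/-!
All forty-eight elements have coordinates in `½ ℤ[√2]`. Doubling them gives six finite sets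
`W_x` of quaternions over `ℤ√2`, a ring with decidable equality, so their products can be
evaluated by the kernel. The map `u ↦ ½ u` from `ℍ[ℤ√2]` to `ℍ[ℝ]` sends `W_x` onto `V_x` and
satisfies `(½ u)(½ v) = ½ (uv / 2)`, so `V_a V_b = V_c` follows from `W_a W_b = 2 W_c`.
-/

instance {R : Type*} [CommRing R] [DecidableEq R] : DecidableEq ℍ[R] := fun _ _ =>
  decidable_of_iff _ Quaternion.ext_iff.symm

/-- Unlike `⟨a, b, c, d⟩`, which elaborates at type `QuaternionAlgebra R (-1) 0 (-1)`, this has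
type `ℍ[R]`, so the `Quaternion` simp lemmas apply to it. -/
def quat {R : Type*} [CommRing R] (a b c d : R) : ℍ[R] := ⟨a, b, c, d⟩

section Quat

variable {R : Type*} [CommRing R] (a b c d : R)

@[simp] theorem re_quat : (quat a b c d).re = a := rfl
@[simp] theorem imI_quat : (quat a b c d).imI = b := rfl
@[simp] theorem imJ_quat : (quat a b c d).imJ = c := rfl
@[simp] theorem imK_quat : (quat a b c d).imK = d := rfl

end Quat

def Quaternion.mapRingHom {R S : Type*} [CommRing R] [CommRing S] (f : R →+* S) :
    ℍ[R] →+* ℍ[S] where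
  toFun x := quat (f x.re) (f x.imI) (f x.imJ) (f x.imK)
  map_one' := by ext <;> simp
  map_mul' x y := by ext <;> simp
  map_zero' := by ext <;> simp
  map_add' x y := by ext <;> simp

theorem image_smul_mul_image_smul_of_mul_eq_two_smul {𝕜 R A : Type*} [Field 𝕜] [NeZero (2 : 𝕜)]
    [Ring R] [Ring A] [Algebra 𝕜 A] (Φ : R →+* A) {S T U : Set R} (h : S * T = (2 : R) • U) :
    (fun u => (2⁻¹ : 𝕜) • Φ u) '' S * (fun u => (2⁻¹ : 𝕜) • Φ u) '' T =
      (fun u => (2⁻¹ : 𝕜) • Φ u) '' U := by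
  have hST : (fun u => (2⁻¹ : 𝕜) • Φ u) '' S * (fun u => (2⁻¹ : 𝕜) • Φ u) '' T =
      (fun v => (2⁻¹ : 𝕜) • (2⁻¹ : 𝕜) • Φ v) '' (S * T) := by
    rw [← Set.image2_mul, ← Set.image2_mul, Set.image2_image_left, Set.image2_image_right,
      Set.image_image2]
    refine Set.image2_congr fun x _ y _ => ?_
    rw [smul_mul_smul_comm, smul_smul, map_mul]
  rw [hST, h, ← Set.image_smul, Set.image_image]
  refine Set.image_congr fun u _ => ?_
  rw [smul_eq_mul, map_mul, map_ofNat, two_mul, ← two_smul 𝕜 (Φ u), inv_smul_smul₀ two_ne_zero]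

def sqrtTwoHom : ℤ√2 →+* ℝ := Zsqrtd.lift ⟨√2, by norm_num⟩

def halfMap (u : ℍ[ℤ√2]) : ℍ[ℝ] := (2⁻¹ : ℝ) • Quaternion.mapRingHom sqrtTwoHom u

theorem image_halfMap_mul_image_halfMap {A B C : Finset ℍ[ℤ√2]}
    (h : A * B = (2 : ℍ[ℤ√2]) • C) : halfMap '' A * halfMap '' B = halfMap '' C :=
  image_smul_mul_image_smul_of_mul_eq_two_smul _
    (by rw [← Finset.coe_mul, h, Finset.coe_smul_finset])

theorem halfMap_quat (a b c d : ℤ√2) :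
    halfMap (quat a b c d) = q (2⁻¹ * (a.re + a.im * √2)) (2⁻¹ * (b.re + b.im * √2))
      (2⁻¹ * (c.re + c.im * √2)) (2⁻¹ * (d.re + d.im * √2)) := by
  ext <;> simp [halfMap, Quaternion.mapRingHom, sqrtTwoHom, q]

theorem s_eq_two_inv_mul_sqrt_two : s = 2⁻¹ * √2 := by
  rw [s, ← Real.sqrt_div_self, div_eq_inv_mul]

open Zsqrtd (sqrtd)

def W₀ : Finset ℍ[ℤ√2] :=
  {quat 2 0 0 0, quat (-2) 0 0 0, quat 0 2 0 0, quat 0 (-2) 0 0,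
   quat 0 0 2 0, quat 0 0 (-2) 0, quat 0 0 0 2, quat 0 0 0 (-2)}

def Wp : Finset ℍ[ℤ√2] :=
  {quat 1 1 1 1, quat (-1) (-1) (-1) (-1), quat 1 1 (-1) (-1), quat 1 (-1) 1 (-1),
   quat 1 (-1) (-1) 1, quat (-1) 1 1 (-1), quat (-1) 1 (-1) 1, quat (-1) (-1) 1 1}

def Wm : Finset ℍ[ℤ√2] :=
  {quat 1 (-1) (-1) (-1), quat (-1) 1 (-1) (-1), quat (-1) (-1) 1 (-1), quat (-1) (-1) (-1) 1,
   quat 1 1 1 (-1), quat 1 1 (-1) 1, quat 1 (-1) 1 1, quat (-1) 1 1 1}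

def W₁ : Finset ℍ[ℤ√2] :=
  {quat sqrtd sqrtd 0 0, quat sqrtd (-sqrtd) 0 0,
   quat (-sqrtd) sqrtd 0 0, quat (-sqrtd) (-sqrtd) 0 0,
   quat 0 0 sqrtd sqrtd, quat 0 0 sqrtd (-sqrtd),
   quat 0 0 (-sqrtd) sqrtd, quat 0 0 (-sqrtd) (-sqrtd)}

def W₂ : Finset ℍ[ℤ√2] :=
  {quat sqrtd 0 sqrtd 0, quat sqrtd 0 (-sqrtd) 0,
   quat (-sqrtd) 0 sqrtd 0, quat (-sqrtd) 0 (-sqrtd) 0,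
   quat 0 sqrtd 0 sqrtd, quat 0 sqrtd 0 (-sqrtd),
   quat 0 (-sqrtd) 0 sqrtd, quat 0 (-sqrtd) 0 (-sqrtd)}

def W₃ : Finset ℍ[ℤ√2] :=
  {quat sqrtd 0 0 sqrtd, quat sqrtd 0 0 (-sqrtd),
   quat (-sqrtd) 0 0 sqrtd, quat (-sqrtd) 0 0 (-sqrtd),
   quat 0 sqrtd sqrtd 0, quat 0 sqrtd (-sqrtd) 0,
   quat 0 (-sqrtd) sqrtd 0, quat 0 (-sqrtd) (-sqrtd) 0}

theorem image_halfMap_W₀ : halfMap '' W₀ = V₀ := by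
  simp only [W₀, V₀, Finset.coe_insert, Finset.coe_singleton, Set.image_insert_eq,
    Set.image_singleton, halfMap_quat]
  norm_num

theorem image_halfMap_Wp : halfMap '' Wp = Vp := by
  simp only [Wp, Vp, Finset.coe_insert, Finset.coe_singleton, Set.image_insert_eq,
    Set.image_singleton, halfMap_quat]
  norm_num

theorem image_halfMap_Wm : halfMap '' Wm = Vm := by
  simp only [Wm, Vm, Finset.coe_insert, Finset.coe_singleton, Set.image_insert_eq,
    Set.image_singleton, halfMap_quat]
  norm_num

theorem image_halfMap_W₁ : halfMap '' W₁ = V₁ := by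
  simp only [W₁, V₁, Finset.coe_insert, Finset.coe_singleton, Set.image_insert_eq,
    Set.image_singleton, halfMap_quat, s_eq_two_inv_mul_sqrt_two]
  norm_num

theorem image_halfMap_W₂ : halfMap '' W₂ = V₂ := by
  simp only [W₂, V₂, Finset.coe_insert, Finset.coe_singleton, Set.image_insert_eq,
    Set.image_singleton, halfMap_quat, s_eq_two_inv_mul_sqrt_two]
  norm_num

theorem image_halfMap_W₃ : halfMap '' W₃ = V₃ := by
  simp only [W₃, V₃, Finset.coe_insert, Finset.coe_singleton, Set.image_insert_eq,
    Set.image_singleton, halfMap_quat, s_eq_two_inv_mul_sqrt_two]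
  norm_num

theorem stmt16 :
    (V₀ * V₀ = V₀ ∧ V₀ * Vp = Vp ∧ Vp * V₀ = Vp ∧ V₀ * Vm = Vm ∧ Vm * V₀ = Vm ∧
      V₀ * V₁ = V₁ ∧ V₁ * V₀ = V₁ ∧ V₀ * V₂ = V₂ ∧ V₂ * V₀ = V₂ ∧
      V₀ * V₃ = V₃ ∧ V₃ * V₀ = V₃) ∧
    (Vp * Vp = Vm ∧ Vp * Vm = V₀ ∧ Vm * Vp = V₀ ∧ Vm * Vm = Vp) ∧
    (Vp * V₁ = V₃ ∧ Vp * V₂ = V₁ ∧ Vp * V₃ = V₂) ∧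
    (Vm * V₁ = V₂ ∧ Vm * V₂ = V₃ ∧ Vm * V₃ = V₁) ∧
    (V₁ * V₁ = V₀ ∧ V₂ * V₂ = V₀ ∧ V₃ * V₃ = V₀) ∧
    (V₁ * V₂ = Vp ∧ V₃ * V₁ = Vp ∧ V₂ * V₃ = Vp) ∧
    (V₂ * V₁ = Vm ∧ V₁ * V₃ = Vm ∧ V₃ * V₂ = Vm) := by
  rw [← image_halfMap_W₀, ← image_halfMap_Wp, ← image_halfMap_Wm, ← image_halfMap_W₁,
    ← image_halfMap_W₂, ← image_halfMap_W₃]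
  and_intros <;> exact image_halfMap_mul_image_halfMap (by decide +kernel)

end
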